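/- The map α ↦ ρ^α from OX_n to the semigroup of normal cones T L(OX_n) is injective: if α, β ∈ OX_n and ρ^α = ρ^β as cones, then α = β. -/

import Mathlib

/-- The semigroup `OX_n` of order-preserving non-invertible transformations of
the chain `Fin n`, composed left to right. -/
def OX (n : ℕ) := {f : Fin n → Fin n // Monotone f ∧ ¬ Function.Surjective f}

instance (n : ℕ) : Mul (OX n) :=
  ⟨fun f g => ⟨g.1 ∘ f.1, g.2.1.comp f.2.1, fun h => g.2.2 h.of_comp⟩⟩

/-- The principal left ideal `S e`. -/
def Lideal {n : ℕ} (e : OX n) : Set (OX n) := {x | ∃ s, x = s * e}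

/-! Right multiplication by `α` sends the constant map `e_x` to the constant map `e_{x α}`, and
`e_x` is an idempotent lying in its own principal left ideal; so the component of `ρ^α` at
`S e_x` already records the value of `α` at `x`. -/

theorem Function.not_surjective_const {X Y : Type*} {f : X → Y} (hf : ¬ Function.Surjective f)
    (a : X) (b : Y) : ¬ Function.Surjective (fun _ : X => b) := fun h =>
  hf fun y => ⟨a, by
    obtain ⟨_, rfl⟩ := h y
    obtain ⟨_, hb⟩ := h (f a)
    exact hb.symm⟩

namespace OX

variable {n : ℕ}

/-- The constant map `e_x`; any element `f` of `OX n` witnesses that it is not surjective. -/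
def const (f : OX n) (x : Fin n) : OX n :=
  ⟨fun _ => x, monotone_const, Function.not_surjective_const f.2.2 x x⟩

theorem mul_const (g f : OX n) (x : Fin n) : g * const f x = const f x := rfl

theorem const_mul (f g : OX n) (x : Fin n) : const f x * g = const f (g.1 x) := rfl

theorem const_injective (f : OX n) : Function.Injective (const f) := fun x _ h =>
  congrFun (congrArg Subtype.val h) x

theorem const_mem_Lideal (f : OX n) (x : Fin n) : const f x ∈ Lideal (const f x) :=
  ⟨const f x, (mul_const _ _ _).symm⟩

end OX

theorem stmt12_general (n : ℕ) (α β : OX n)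
    (hcomp : ∀ e : OX n, e * e = e → ∀ x ∈ Lideal e, x * α = x * β) :
    α = β := by
  refine Subtype.ext (funext fun x => ?_)
  have h := hcomp (OX.const α x) (OX.mul_const _ _ _) _ (OX.const_mem_Lideal α x)
  rw [OX.const_mul, OX.const_mul] at h
  exact OX.const_injective α h

/-- The map `α ↦ ρ^α` into normal cones is injective: if the principal cones of
`α` and `β` have the same vertex and the same components (the component of
`ρ^α` at `S e` being `x ↦ x α`), then `α = β`. -/
theorem stmt12 (n : ℕ) (hn : 3 ≤ n) (α β : OX n)
    (hvtx : Set.range α.1 = Set.range β.1)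
    (hcomp : ∀ e : OX n, e * e = e → ∀ x ∈ Lideal e, x * α = x * β) :
    α = β :=
  stmt12_general n α β hcomp
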